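/- arXiv:1805.12366 — 2 statements merged into one kernel-verified Lean document; each statement's English description precedes it below -/
import Mathlib

section
/- Vanishing lemma on the unit circle: Let v : S¹ → Mₙ(ℂ) be continuous and suppose the Hermitian part (v(z) + v(z)ᴴ)/2 is positive definite for every z ∈ S¹. Let (m₋, m₊) be a sectionally holomorphic pair such that m₊(z) → 0 as |z| → ∞ and m₊(z) = m₋(z) · v(z) for all z ∈ S¹. Then m₋ is identically zero on the closed unit disk and m₊ is identically zero on {|z| ≥ 1}. -/
/-!
Fix a row `a(z)` of `m₋` and let `b` be the Schwarz reflection `z ↦ conj (m₊ (1 / conj z))` of the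
same row of `m₊`, extended by `0` at the origin. Both are holomorphic in the disk, so the mean value
property gives that `g = a ⬝ᵥ b` has circle average `g 0 = 0`. On the circle `b = conj (a v)`, so
`Re g` is the quadratic form of the Hermitian part of `v` at `conj a`: nonnegative, and positive
wherever `a ≠ 0`. Hence `m₋` vanishes on the circle, then on the disk by the maximum principle, and
`m₊` vanishes on the circle by the jump relation, then outside because its reflection vanishes
inside.
-/

open Complex Filter Matrix
open scoped ComplexOrder

/-- A pair `(m₋, m₊)` of matrix-valued functions is sectionally holomorphic if
`m₋` is continuous on the closed unit disk and holomorphic on the open unit disk,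
and `m₊` is continuous on `{|z| ≥ 1}` and holomorphic on `{|z| > 1}`. -/
def SectHoloPair (n : ℕ) (mm mp : ℂ → Matrix (Fin n) (Fin n) ℂ) : Prop :=
  ContinuousOn mm {z : ℂ | ‖z‖ ≤ 1} ∧
  (∀ i j, DifferentiableOn ℂ (fun z => mm z i j) {z : ℂ | ‖z‖ < 1}) ∧
  ContinuousOn mp {z : ℂ | 1 ≤ ‖z‖} ∧
  (∀ i j, DifferentiableOn ℂ (fun z => mp z i j) {z : ℂ | 1 < ‖z‖})

open Metric Function Real
open scoped Topology ComplexConjugate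

theorem Matrix.PosDef.re_dotProduct_star_vecMul_pos {ι : Type*} [Fintype ι] {V : Matrix ι ι ℂ}
    (hV : ((1 / 2 : ℂ) • (V + Vᴴ)).PosDef) {a : ι → ℂ} (ha : a ≠ 0) :
    0 < (a ⬝ᵥ star (a ᵥ* V)).re := by
  have hadj : a ⬝ᵥ star (a ᵥ* V) = a ⬝ᵥ (Vᴴ *ᵥ star a) := by rw [star_vecMul]
  have hconj : star (a ⬝ᵥ star (a ᵥ* V)) = a ⬝ᵥ (V *ᵥ star a) := by
    rw [dotProduct_star, star_star, dotProduct_mulVec]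
  have hform : star (star a) ⬝ᵥ (((1 / 2 : ℂ) • (V + Vᴴ)) *ᵥ star a)
      = (1 / 2 : ℂ) * (star (a ⬝ᵥ star (a ᵥ* V)) + a ⬝ᵥ star (a ᵥ* V)) := by
    rw [hconj, hadj, star_star, smul_mulVec, add_mulVec, dotProduct_smul, dotProduct_add,
      smul_eq_mul]
  have hpos := (Complex.pos_iff.mp (hV.dotProduct_mulVec_pos (star_ne_zero.mpr ha))).1
  rw [hform] at hpos
  simpa using hpos

theorem Real.circleAverage_pos {f : ℂ → ℝ} {c : ℂ} {R : ℝ}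
    (hf : ContinuousOn f (sphere c |R|)) (hf₀ : ∀ z ∈ sphere c |R|, 0 ≤ f z)
    {z₀ : ℂ} (hz₀ : z₀ ∈ sphere c |R|) (hfz₀ : 0 < f z₀) :
    0 < circleAverage f c R := by
  obtain ⟨θ₀, rfl⟩ : z₀ ∈ Set.range (circleMap c R) := by rwa [range_circleMap]
  rw [circleAverage_eq_integral_add (θ₀ - π)]
  refine smul_pos (by positivity) (intervalIntegral.integral_pos two_pi_pos ?_
    (fun θ _ => hf₀ _ (circleMap_mem_sphere' c R _)) ⟨π, ⟨pi_pos.le, by linarith [pi_pos]⟩, ?_⟩)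
  · exact hf.comp_continuous (by fun_prop) (fun θ => circleMap_mem_sphere' c R _) |>.continuousOn
  · simpa using hfz₀

theorem DiffContOnCl.dotProduct {𝕜 E ι : Type*} [NontriviallyNormedField 𝕜]
    [NormedAddCommGroup E] [NormedSpace 𝕜 E] [Fintype ι] {f g : ι → E → 𝕜} {s : Set E}
    (hf : ∀ k, DiffContOnCl 𝕜 (f k) s) (hg : ∀ k, DiffContOnCl 𝕜 (g k) s) :
    DiffContOnCl 𝕜 (fun z => (fun k => f k z) ⬝ᵥ fun k => g k z) s :=
  ⟨DifferentiableOn.fun_sum fun k _ => (hf k).1.mul (hg k).1,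
    continuousOn_finsetSum _ fun k _ => (hf k).2.mul (hg k).2⟩

theorem DiffContOnCl.eqOn_zero_closedBall {E : Type*} [NormedAddCommGroup E] [NormedSpace ℂ E]
    {f : ℂ → E} {c : ℂ} {r : ℝ} (hf : DiffContOnCl ℂ f (ball c r)) (hr : r ≠ 0)
    (hf₀ : Set.EqOn f 0 (sphere c r)) : Set.EqOn f 0 (closedBall c r) := by
  rw [← closure_ball c hr]
  exact Complex.eqOn_closure_of_eqOn_frontier isBounded_ball hf diffContOnCl_const
    (by rwa [frontier_ball c hr])

/-- The Schwarz reflection of `f` across the unit circle. The value `0` at the origin is its limit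
there when `f` tends to `0` at infinity. -/
noncomputable def reflectUnitCircle (f : ℂ → ℂ) : ℂ → ℂ :=
  update (fun z => conj (f (conj z)⁻¹)) 0 0

theorem reflectUnitCircle_conj_inv (f : ℂ → ℂ) {z : ℂ} (hz : z ≠ 0) :
    reflectUnitCircle f (conj z)⁻¹ = conj (f z) := by
  simp [reflectUnitCircle, hz]

theorem reflectUnitCircle_of_norm_eq_one (f : ℂ → ℂ) {z : ℂ} (hz : ‖z‖ = 1) :
    reflectUnitCircle f z = conj (f z) := by
  have hz₀ : z ≠ 0 := norm_ne_zero_iff.mp (by simp [hz])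
  rw [← reflectUnitCircle_conj_inv f hz₀, ← inv_eq_conj (by simpa using hz), inv_inv]

theorem tendsto_conj_inv_nhdsNE_zero :
    Tendsto (fun z : ℂ => (conj z)⁻¹) (𝓝[≠] 0) (comap (‖·‖) atTop) := by
  rw [tendsto_comap_iff]
  refine tendsto_norm_nhdsNE_zero.inv_tendsto_nhdsGT_zero.congr fun z => ?_
  simp

theorem diffContOnCl_reflectUnitCircle {f : ℂ → ℂ} (hc : ContinuousOn f {z | 1 ≤ ‖z‖})
    (hd : DifferentiableOn ℂ f {z | 1 < ‖z‖}) (hf : Tendsto f (comap (‖·‖) atTop) (𝓝 0)) :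
    DiffContOnCl ℂ (reflectUnitCircle f) (ball 0 1) := by
  have hlim : Tendsto (fun z => conj (f (conj z)⁻¹)) (𝓝[≠] 0) (𝓝 0) := by
    have := (continuous_conj.tendsto 0).comp (hf.comp tendsto_conj_inv_nhdsNE_zero)
    rwa [map_zero] at this
  have hnorm : ∀ z : ℂ, ‖(conj z)⁻¹‖ = ‖z‖⁻¹ := fun z => by simp
  refine ⟨?_, ?_⟩
  · rw [← Complex.differentiableOn_compl_singleton_and_continuousAt_iff (ball_mem_nhds 0 one_pos)]
    refine ⟨fun z ⟨hz₁, hz₀⟩ => ?_, continuousAt_update_same.mpr hlim⟩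
    have hz₀ : z ≠ 0 := hz₀
    have hinv : DifferentiableAt ℂ (fun w => f w⁻¹) (conj z) := by
      refine (hd.differentiableAt (isOpen_lt continuous_const continuous_norm |>.mem_nhds ?_)).comp
        _ (differentiableAt_inv (by simpa using hz₀))
      rw [Set.mem_ofPred_eq, hnorm, one_lt_inv₀ (norm_pos_iff.mpr hz₀)]
      simpa using hz₁
    refine (differentiableAt_conj_conj_iff.mpr hinv).congr_of_eventuallyEq ?_
      |>.differentiableWithinAt
    filter_upwards [isOpen_ne.mem_nhds hz₀] with w hw
    simp [reflectUnitCircle, hw]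
  · rw [closure_ball 0 one_ne_zero, reflectUnitCircle, continuousOn_update_iff]
    refine ⟨?_, fun _ => hlim.mono_left (nhdsWithin_mono _ (by simp))⟩
    refine continuous_conj.comp_continuousOn (hc.comp ?_ fun z ⟨hz₁, hz₀⟩ => ?_)
    · exact continuous_conj.continuousOn.inv₀ fun z ⟨_, hz₀⟩ => by simpa using hz₀
    · rw [Set.mem_ofPred_eq, hnorm, one_le_inv₀ (norm_pos_iff.mpr hz₀)]
      simpa using hz₁

theorem eq_zero_of_diffContOnCl_reflectUnitCircle {f : ℂ → ℂ}
    (hf : DiffContOnCl ℂ (reflectUnitCircle f) (ball 0 1)) (hf₁ : ∀ z, ‖z‖ = 1 → f z = 0)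
    {z : ℂ} (hz : 1 ≤ ‖z‖) : f z = 0 := by
  have hz₀ : z ≠ 0 := norm_pos_iff.mp (one_pos.trans_le hz)
  have h := hf.eqOn_zero_closedBall one_ne_zero (fun w hw => ?_) (x := (conj z)⁻¹) ?_
  · rwa [reflectUnitCircle_conj_inv f hz₀, Pi.zero_apply, map_eq_zero] at h
  · rw [mem_sphere_zero_iff_norm] at hw
    simp [reflectUnitCircle_of_norm_eq_one f hw, hf₁ w hw]
  · rw [mem_closedBall_zero_iff, norm_inv, norm_conj]
    exact inv_le_one_of_one_le₀ hz

namespace SectHoloPair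

variable {n : ℕ} {mm mp : ℂ → Matrix (Fin n) (Fin n) ℂ}

theorem diffContOnCl_left (h : SectHoloPair n mm mp) (i j : Fin n) :
    DiffContOnCl ℂ (fun z => mm z i j) (ball 0 1) := by
  refine ⟨?_, ?_⟩
  · rw [show ball (0 : ℂ) 1 = {z | ‖z‖ < 1} by ext; simp]
    exact h.2.1 i j
  · rw [closure_ball 0 one_ne_zero, show closedBall (0 : ℂ) 1 = {z | ‖z‖ ≤ 1} by ext; simp]
    exact (continuous_id.matrix_elem i j).comp_continuousOn h.1

theorem diffContOnCl_reflect_right (h : SectHoloPair n mm mp)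
    (hlim : Tendsto mp (comap (‖·‖) atTop) (𝓝 0)) (i j : Fin n) :
    DiffContOnCl ℂ (reflectUnitCircle fun z => mp z i j) (ball 0 1) :=
  diffContOnCl_reflectUnitCircle ((continuous_id.matrix_elem i j).comp_continuousOn h.2.2.1)
    (h.2.2.2 i j) (((continuous_id.matrix_elem i j).tendsto 0).comp hlim)

theorem left_eq_zero_of_norm_eq_one (h : SectHoloPair n mm mp) {v : ℂ → Matrix (Fin n) (Fin n) ℂ}
    (hv : ∀ z : ℂ, ‖z‖ = 1 → (((1 : ℂ) / 2) • (v z + (v z)ᴴ)).PosDef)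
    (hlim : Tendsto mp (comap (‖·‖) atTop) (𝓝 0))
    (hjump : ∀ z : ℂ, ‖z‖ = 1 → mp z = mm z * v z) {z : ℂ} (hz : ‖z‖ = 1) : mm z = 0 := by
  funext i
  set g : ℂ → ℂ := fun w => mm w i ⬝ᵥ fun k => reflectUnitCircle (fun u => mp u i k) w
  have hg : DiffContOnCl ℂ g (ball 0 |1|) := by
    rw [abs_one]
    exact DiffContOnCl.dotProduct (h.diffContOnCl_left i) (h.diffContOnCl_reflect_right hlim i)
  have hg_circle : ∀ w : ℂ, ‖w‖ = 1 → g w = mm w i ⬝ᵥ star (mm w i ᵥ* v w) := fun w hw => by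
    simp only [g, reflectUnitCircle_of_norm_eq_one _ hw, hjump w hw, mul_apply_eq_vecMul]
    rfl
  have hg_sphere : ContinuousOn g (sphere 0 |1|) :=
    hg.continuousOn_ball.mono sphere_subset_closedBall
  have havg : circleAverage (fun w => (g w).re) 0 1 = 0 := by
    rw [show (fun w => (g w).re) = reCLM ∘ g from rfl,
      reCLM.circleAverage_comp_comm hg_sphere.circleIntegrable',
      hg.circleAverage]
    simp [g, reflectUnitCircle]
  by_contra hrow
  refine (circleAverage_pos ?_ (fun w hw => ?_) (z₀ := z) (by simpa using hz) ?_).ne' havg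
  · exact continuous_re.comp_continuousOn hg_sphere
  · have hw : ‖w‖ = 1 := by simpa using hw
    rw [hg_circle w hw]
    rcases eq_or_ne (mm w i) 0 with hzero | hne
    · simp [hzero]
    · exact (hv w hw).re_dotProduct_star_vecMul_pos hne |>.le
  · rw [hg_circle z hz]
    exact (hv z hz).re_dotProduct_star_vecMul_pos hrow

end SectHoloPair

theorem vanishing_lemma_unit_circle_general
    (n : ℕ) (v : ℂ → Matrix (Fin n) (Fin n) ℂ)
    (hv_pos : ∀ z : ℂ, ‖z‖ = 1 →
      (((1 : ℂ) / 2) • (v z + (v z)ᴴ)).PosDef)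
    (mm mp : ℂ → Matrix (Fin n) (Fin n) ℂ)
    (hpair : SectHoloPair n mm mp)
    (hlim : Tendsto mp (Filter.comap (fun z : ℂ => ‖z‖) Filter.atTop) (nhds 0))
    (hjump : ∀ z : ℂ, ‖z‖ = 1 → mp z = mm z * v z) :
    (∀ z : ℂ, ‖z‖ ≤ 1 → mm z = 0) ∧
    (∀ z : ℂ, 1 ≤ ‖z‖ → mp z = 0) := by
  have hcircle : ∀ z : ℂ, ‖z‖ = 1 → mm z = 0 := fun z hz =>
    hpair.left_eq_zero_of_norm_eq_one hv_pos hlim hjump hz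
  have hdisk : ∀ z : ℂ, ‖z‖ ≤ 1 → mm z = 0 := by
    intro z hz
    ext i j
    refine (hpair.diffContOnCl_left i j).eqOn_zero_closedBall one_ne_zero (fun w hw => ?_)
      (by simpa using hz)
    simp [hcircle w (by simpa using hw)]
  refine ⟨hdisk, fun z hz => ?_⟩
  ext i j
  exact eq_zero_of_diffContOnCl_reflectUnitCircle (hpair.diffContOnCl_reflect_right hlim i j)
    (fun w hw => by simp [hjump w hw, hcircle w hw]) hz

theorem vanishing_lemma_unit_circle
    (n : ℕ) (v : ℂ → Matrix (Fin n) (Fin n) ℂ)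
    (hv_cont : ContinuousOn v {z : ℂ | ‖z‖ = 1})
    (hv_pos : ∀ z : ℂ, ‖z‖ = 1 →
      (((1 : ℂ) / 2) • (v z + (v z)ᴴ)).PosDef)
    (mm mp : ℂ → Matrix (Fin n) (Fin n) ℂ)
    (hpair : SectHoloPair n mm mp)
    (hlim : Tendsto mp (Filter.comap (fun z : ℂ => ‖z‖) Filter.atTop) (nhds 0))
    (hjump : ∀ z : ℂ, ‖z‖ = 1 → mp z = mm z * v z) :
    (∀ z : ℂ, ‖z‖ ≤ 1 → mm z = 0) ∧
    (∀ z : ℂ, 1 ≤ ‖z‖ → mp z = 0) :=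
  vanishing_lemma_unit_circle_general n v hv_pos mm mp hpair hlim hjump
end

section
/- Uniqueness of partial indices on the circle: Let v : S¹ → Mₙ(ℂ) and suppose v admits two factorizations v(z) = a₋(z)⁻¹ · diag(z^{k₁}, …, z^{kₙ}) · a₊(z) = b₋(z)⁻¹ · diag(z^{l₁}, …, z^{lₙ}) · b₊(z) on S¹, where k₁ ≥ … ≥ kₙ and l₁ ≥ … ≥ lₙ are integers, (a₋, a₊) and (b₋, b₊) are sectionally holomorphic pairs whose determinants vanish nowhere on their closed domains, and a₋, b₋ converge to invertible matrices as |z| → ∞. Then kᵢ = lᵢ for every i = 1, …, n. -/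
/-!
Write `P = bp · ap⁻¹` and `M = bm · am⁻¹`: `P` is holomorphic inside the unit circle, `M` is
holomorphic outside it with limit `H = hb · ha⁻¹` at infinity, and the two factorizations give
`M · diag(z^k) = diag(z^l) · P` on the circle. If `k j < l i`, then `M i j` agrees on the circle
with `z^(l i - k j) · P i j`, which vanishes at `0`; Cauchy's formula inside and outside the circle
forces `H i j = 0`. If `k p < l p` for some `p`, monotonicity of `k` and `l` makes `H` vanish on
the block `i ≤ p ≤ j`, which is too large for `H` to be invertible.
-/

open Complex Filter Matrix

/-- `(mp, mm, h, k)` is a Riemann-Hilbert factorization of `v` on the unit circle: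
`mp` is continuous on the closed unit disk, holomorphic inside, with nowhere
vanishing determinant; `mm` is continuous on `{|z| ≥ 1}`, holomorphic on
`{|z| > 1}`, with nowhere vanishing determinant, converging to the invertible
matrix `h` at infinity; and `v = mm⁻¹ ⬝ diag(z^{k i}) ⬝ mp` on the circle. -/
def IsRHFactorization (n : ℕ) (v : ℂ → Matrix (Fin n) (Fin n) ℂ)
    (mp mm : ℂ → Matrix (Fin n) (Fin n) ℂ) (h : Matrix (Fin n) (Fin n) ℂ)
    (k : Fin n → ℤ) : Prop :=
  Antitone k ∧
  ContinuousOn mp {z : ℂ | ‖z‖ ≤ 1} ∧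
  (∀ i j, DifferentiableOn ℂ (fun z => mp z i j) {z : ℂ | ‖z‖ < 1}) ∧
  (∀ z : ℂ, ‖z‖ ≤ 1 → (mp z).det ≠ 0) ∧
  ContinuousOn mm {z : ℂ | 1 ≤ ‖z‖} ∧
  (∀ i j, DifferentiableOn ℂ (fun z => mm z i j) {z : ℂ | 1 < ‖z‖}) ∧
  (∀ z : ℂ, 1 ≤ ‖z‖ → (mm z).det ≠ 0) ∧
  Filter.Tendsto mm (Filter.comap (fun z : ℂ => ‖z‖) Filter.atTop) (nhds h) ∧ IsUnit h ∧
  (∀ z : ℂ, ‖z‖ = 1 →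
    v z = (mm z)⁻¹ * Matrix.diagonal (fun i => z ^ (k i)) * mp z)

open Metric Real Topology Bornology

theorem Matrix.det_eq_zero_of_forall_le_le {ι R : Type*} [Fintype ι] [DecidableEq ι]
    [LinearOrder ι] [LocallyFiniteOrderTop ι] [CommRing R] (A : Matrix ι ι R) (p : ι)
    (h : ∀ i j, i ≤ p → p ≤ j → A i j = 0) : A.det = 0 := by
  rw [Matrix.det_apply]
  refine Finset.sum_eq_zero fun σ _ => ?_
  obtain ⟨j, hpj, hσj⟩ : ∃ j, p ≤ j ∧ σ j ≤ p := by
    by_contra! hσ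
    have hcard : (Finset.Ici p).card ≤ (Finset.Ioi p).card :=
      Finset.card_le_card_of_injOn σ (fun j hj => Finset.mem_Ioi.2 (hσ j (Finset.mem_Ici.1 hj)))
        σ.injective.injOn
    have hpos : 0 < (Finset.Ici p).card := Finset.card_pos.2 ⟨p, Finset.mem_Ici.2 le_rfl⟩
    rw [Finset.card_Ioi_eq_card_Ici_sub_one] at hcard
    omega
  rw [Finset.prod_eq_zero (f := fun i => A (σ i) i) (Finset.mem_univ j) (h _ _ hσj hpj), smul_zero]

section Entrywise

variable {𝕜 ι : Type*} [NontriviallyNormedField 𝕜] [Fintype ι] {s : Set 𝕜} {A B : 𝕜 → Matrix ι ι 𝕜}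

theorem Matrix.differentiableOn_mul_apply
    (hA : ∀ i j, DifferentiableOn 𝕜 (fun x => A x i j) s)
    (hB : ∀ i j, DifferentiableOn 𝕜 (fun x => B x i j) s) (i j : ι) :
    DifferentiableOn 𝕜 (fun x => (A x * B x) i j) s := by
  simp only [Matrix.mul_apply]
  exact DifferentiableOn.fun_sum fun t _ => (hA i t).mul (hB t j)

variable [DecidableEq ι]

theorem Matrix.differentiableOn_det (hA : ∀ i j, DifferentiableOn 𝕜 (fun x => A x i j) s) :
    DifferentiableOn 𝕜 (fun x => (A x).det) s := by
  simp only [Matrix.det_apply]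
  exact DifferentiableOn.fun_sum fun σ _ =>
    (DifferentiableOn.fun_finsetProd (u := Finset.univ) (f := fun i x => A x (σ i) i)
      fun i _ => hA (σ i) i).const_smul _

theorem Matrix.differentiableOn_adjugate_apply
    (hA : ∀ i j, DifferentiableOn 𝕜 (fun x => A x i j) s) (i j : ι) :
    DifferentiableOn 𝕜 (fun x => (A x).adjugate i j) s := by
  simp only [Matrix.adjugate_apply]
  refine Matrix.differentiableOn_det fun a b => ?_
  simp only [Matrix.updateRow_apply]
  split_ifs
  exacts [differentiableOn_const _, hA a b]

theorem Matrix.differentiableOn_inv_apply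
    (hA : ∀ i j, DifferentiableOn 𝕜 (fun x => A x i j) s) (hdet : ∀ x ∈ s, (A x).det ≠ 0)
    (i j : ι) : DifferentiableOn 𝕜 (fun x => (A x)⁻¹ i j) s := by
  simp only [Matrix.inv_def, Matrix.smul_apply, smul_eq_mul, Ring.inverse_eq_inv']
  exact ((Matrix.differentiableOn_det hA).inv hdet).mul
    (Matrix.differentiableOn_adjugate_apply hA i j)

end Entrywise

theorem Matrix.continuousAt_inv_of_det_ne_zero {ι 𝕜 : Type*} [Fintype ι] [DecidableEq ι]
    [NormedField 𝕜] {A : Matrix ι ι 𝕜} (h : A.det ≠ 0) : ContinuousAt Inv.inv A :=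
  continuousAt_matrix_inv A (by rw [Ring.inverse_eq_inv']; exact continuousAt_inv₀ h)

theorem Filter.Tendsto.mul_matrix_inv {X ι 𝕜 : Type*} [Fintype ι] [DecidableEq ι] [NormedField 𝕜]
    {l : Filter X} {A B : X → Matrix ι ι 𝕜} {a b : Matrix ι ι 𝕜} (hA : Tendsto A l (𝓝 a))
    (hB : Tendsto B l (𝓝 b)) (hb : b.det ≠ 0) :
    Tendsto (fun x => A x * (B x)⁻¹) l (𝓝 (a * b⁻¹)) :=
  hA.mul ((Matrix.continuousAt_inv_of_det_ne_zero hb).tendsto.comp hB)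

theorem Matrix.mul_inv_mul_eq_mul_mul_inv {ι R : Type*} [Fintype ι] [DecidableEq ι] [CommRing R]
    {A B A' B' D D' : Matrix ι ι R} (hA' : IsUnit A'.det) (hB : IsUnit B.det)
    (h : A⁻¹ * D * B = A'⁻¹ * D' * B') : A' * A⁻¹ * D = D' * (B' * B⁻¹) := by
  have := congrArg (fun X => A' * X * B⁻¹) h
  simp only [Matrix.mul_assoc, Matrix.mul_nonsing_inv _ hB, Matrix.mul_one] at this
  rw [Matrix.mul_assoc, this, ← Matrix.mul_assoc A', Matrix.mul_nonsing_inv _ hA', Matrix.one_mul]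

section CauchyAtInfinity

variable {E : Type*} [NormedAddCommGroup E] [NormedSpace ℂ E] [CompleteSpace E]

/-- Cauchy's formula at infinity: by the annulus theorem the integral does not depend on the
radius, and on large circles `g` is uniformly close to `y`. -/
theorem circleIntegral_inv_smul_of_tendsto_cobounded {r : ℝ} (hr : 0 < r) {g : ℂ → E} {y : E}
    (hc : ContinuousOn g {z | r ≤ ‖z‖}) (hd : DifferentiableOn ℂ g {z | r < ‖z‖})
    (hy : Tendsto g (cobounded ℂ) (𝓝 y)) :
    (∮ z in C(0, r), z⁻¹ • g z) = (2 * π * I : ℂ) • y := by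
  rw [← sub_eq_zero, ← norm_le_zero_iff]
  refine le_of_forall_gt_imp_ge_of_dense fun ε ε0 => ?_
  obtain ⟨R₀, -, hR₀⟩ := (hasBasis_cobounded_norm.tendsto_iff nhds_basis_ball).1 hy _
    (div_pos ε0 Real.two_pi_pos)
  set R := max r R₀
  have hR : 0 < R := hr.trans_le (le_max_left _ _)
  have hsphere : ∀ z ∈ sphere (0 : ℂ) R, r ≤ ‖z‖ ∧ z ≠ 0 := fun z hz => by
    rw [mem_sphere_zero_iff_norm] at hz
    exact ⟨hz ▸ le_max_left _ _, norm_pos_iff.1 (hz ▸ hR)⟩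
  have hinv : ContinuousOn (fun z : ℂ => z⁻¹) (sphere 0 R) :=
    continuousOn_inv₀.mono fun z hz => (hsphere z hz).2
  calc ‖(∮ z in C(0, r), z⁻¹ • g z) - (2 * π * I : ℂ) • y‖
      = ‖(∮ z in C(0, R), z⁻¹ • g z) - ∮ z in C(0, R), z⁻¹ • y‖ := by
        congr 2
        · have hsub : closedBall (0 : ℂ) R \ ball 0 r ⊆ {z | r ≤ ‖z‖} := fun z hz => by
            simpa using hz.2
          simpa only [sub_zero] using
            (circleIntegral_sub_center_inv_smul_eq_of_differentiable_on_annulus_off_countable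
              hr (le_max_left r R₀) Set.countable_empty (hc.mono hsub) fun z hz =>
              hd.differentiableAt ((isOpen_lt continuous_const continuous_norm).mem_nhds
                (by simpa using hz.1.2))).symm
        · rw [circleIntegral.integral_smul_const]
          congr 1
          simpa using
            (circleIntegral.integral_sub_inv_of_mem_ball (mem_ball_self (x := (0 : ℂ)) hR)).symm
    _ = ‖∮ z in C(0, R), z⁻¹ • (g z - y)‖ := by
        simp only [smul_sub]
        rw [circleIntegral.integral_sub] <;> refine (hinv.smul ?_).circleIntegrable hR.le
        · exact hc.mono fun z hz => (hsphere z hz).1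
        · exact continuousOn_const
    _ ≤ 2 * π * R * (R⁻¹ * (ε / (2 * π))) := by
        refine circleIntegral.norm_integral_le_of_norm_le_const hR.le fun z hz => ?_
        have hzR : ‖z‖ = R := mem_sphere_zero_iff_norm.1 hz
        rw [norm_smul, norm_inv, hzR, ← dist_eq_norm]
        have hzR₀ : R₀ ≤ ‖z‖ := hzR ▸ le_max_right r R₀
        exact mul_le_mul_of_nonneg_left (mem_ball.1 (hR₀ z hzR₀)).le (inv_nonneg.2 hR.le)
    _ = ε := by field

theorem DiffContOnCl.apply_zero_eq_of_eqOn_sphere {r : ℝ} (hr : 0 < r) {f g : ℂ → E} {y : E}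
    (hf : DiffContOnCl ℂ f (ball 0 r)) (hc : ContinuousOn g {z | r ≤ ‖z‖})
    (hd : DifferentiableOn ℂ g {z | r < ‖z‖}) (hy : Tendsto g (cobounded ℂ) (𝓝 y))
    (hfg : Set.EqOn f g (sphere 0 r)) : f 0 = y := by
  refine smul_right_injective E two_pi_I_ne_zero ?_
  calc (2 * π * I : ℂ) • f 0 = ∮ z in C(0, r), (z - 0)⁻¹ • f z :=
        (hf.circleIntegral_sub_inv_smul (mem_ball_self hr)).symm
    _ = ∮ z in C(0, r), z⁻¹ • g z :=
        circleIntegral.integral_congr hr.le fun z hz => by simp only [sub_zero, hfg hz]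
    _ = (2 * π * I : ℂ) • y := circleIntegral_inv_smul_of_tendsto_cobounded hr hc hd hy

end CauchyAtInfinity

namespace IsRHFactorization

variable {n : ℕ} {v ap am bp bm : ℂ → Matrix (Fin n) (Fin n) ℂ} {ha hb : Matrix (Fin n) (Fin n) ℂ}
  {k l : Fin n → ℤ}

theorem mul_inv_apply_eq_zero (hfa : IsRHFactorization n v ap am ha k)
    (hfb : IsRHFactorization n v bp bm hb l) {i j : Fin n} (hij : k j < l i) :
    (hb * ha⁻¹) i j = 0 := by
  obtain ⟨-, hapc, hapd, hapdet, hamc, hamd, hamdet, haml, hau, hav⟩ := hfa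
  obtain ⟨-, hbpc, hbpd, -, hbmc, hbmd, hbmdet, hbml, -, hbv⟩ := hfb
  obtain ⟨m, hm⟩ : ∃ m : ℕ, l i = k j + (m + 1 : ℕ) := ⟨(l i - k j - 1).toNat, by omega⟩
  set P : ℂ → Matrix (Fin n) (Fin n) ℂ := fun z => bp z * (ap z)⁻¹
  set M : ℂ → Matrix (Fin n) (Fin n) ℂ := fun z => bm z * (am z)⁻¹
  have hPc : ContinuousOn P {z | ‖z‖ ≤ 1} := fun z hz =>
    Tendsto.mul_matrix_inv (hbpc z hz) (hapc z hz) (hapdet z hz)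
  have hMc : ContinuousOn M {z | 1 ≤ ‖z‖} := fun z hz =>
    Tendsto.mul_matrix_inv (hbmc z hz) (hamc z hz) (hamdet z hz)
  have hPd : DifferentiableOn ℂ (fun z => P z i j) {z | ‖z‖ < 1} :=
    differentiableOn_mul_apply hbpd
      (differentiableOn_inv_apply hapd fun z hz => hapdet z (le_of_lt hz)) i j
  have hMd : DifferentiableOn ℂ (fun z => M z i j) {z | 1 < ‖z‖} :=
    differentiableOn_mul_apply hbmd
      (differentiableOn_inv_apply hamd fun z hz => hamdet z (le_of_lt hz)) i j
  have hMlim : Tendsto M (cobounded ℂ) (𝓝 (hb * ha⁻¹)) := by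
    rw [← comap_norm_atTop]
    exact hbml.mul_matrix_inv haml ((isUnit_iff_isUnit_det ha).1 hau).ne_zero
  have hcircle : ∀ z : ℂ, ‖z‖ = 1 → z ^ (m + 1) * P z i j = M z i j := by
    intro z hz
    have hz0 : z ≠ 0 := norm_ne_zero_iff.1 (hz ▸ one_ne_zero)
    have hMP : M z * diagonal (fun t => z ^ k t) = diagonal (fun t => z ^ l t) * P z :=
      mul_inv_mul_eq_mul_mul_inv (isUnit_iff_ne_zero.2 (hbmdet z hz.ge))
        (isUnit_iff_ne_zero.2 (hapdet z hz.le)) ((hav z hz).symm.trans (hbv z hz))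
    have hentry := congrFun (congrFun hMP i) j
    rw [mul_diagonal, diagonal_mul, hm, zpow_add₀ hz0, zpow_natCast] at hentry
    exact mul_left_cancel₀ (zpow_ne_zero (k j) hz0) (by linear_combination -hentry)
  have hf : DiffContOnCl ℂ (fun z => z ^ (m + 1) * P z i j) (ball 0 1) := by
    have hball : ball (0 : ℂ) 1 = {z | ‖z‖ < 1} := by ext; simp
    have hclosedBall : closure (ball (0 : ℂ) 1) = {z | ‖z‖ ≤ 1} := by
      rw [closure_ball _ one_ne_zero]; ext; simp
    refine ⟨?_, ?_⟩
    · rw [hball]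
      exact (differentiableOn_pow _).mul hPd
    · rw [hclosedBall]
      exact (continuous_pow _).continuousOn.mul
        ((continuous_apply_apply i j).comp_continuousOn hPc)
  have hglue := hf.apply_zero_eq_of_eqOn_sphere one_pos
    ((continuous_apply_apply i j).comp_continuousOn hMc) hMd
    (((continuous_apply_apply i j).tendsto _).comp hMlim)
    fun z hz => hcircle z (mem_sphere_zero_iff_norm.1 hz)
  simpa using hglue.symm

theorem le_of_isRHFactorization (hfa : IsRHFactorization n v ap am ha k)
    (hfb : IsRHFactorization n v bp bm hb l) (p : Fin n) : l p ≤ k p := by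
  have ⟨hk, _, _, _, _, _, _, _, hau, _⟩ := hfa
  have ⟨hl, _, _, _, _, _, _, _, hbu, _⟩ := hfb
  by_contra! hp
  have hdet : (hb * ha⁻¹).det ≠ 0 := by
    rw [det_mul]
    exact (((isUnit_iff_isUnit_det hb).1 hbu).mul
      (isUnit_nonsing_inv_det _ ((isUnit_iff_isUnit_det ha).1 hau))).ne_zero
  refine hdet (det_eq_zero_of_forall_le_le _ p fun i j hip hpj => hfa.mul_inv_apply_eq_zero hfb ?_)
  exact (hk hpj).trans_lt (hp.trans_le (hl hip))

end IsRHFactorization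

theorem partial_indices_unique
    (n : ℕ) (v : ℂ → Matrix (Fin n) (Fin n) ℂ)
    (ap am bp bm : ℂ → Matrix (Fin n) (Fin n) ℂ)
    (ha hb : Matrix (Fin n) (Fin n) ℂ)
    (k l : Fin n → ℤ)
    (hfa : IsRHFactorization n v ap am ha k)
    (hfb : IsRHFactorization n v bp bm hb l) :
    ∀ i : Fin n, k i = l i := fun i =>
  le_antisymm (hfb.le_of_isRHFactorization hfa i) (hfa.le_of_isRHFactorization hfb i)
end
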